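/- Let A, Ã ∈ ℝ^{m×n} be entrywise nonnegative and let ε ≥ 0. If Ã ⊵_ε A, then Ã·1ₙ = A·1ₙ and Ãᵀ·1ₘ = Aᵀ·1ₘ; that is, every row sum of Ã equals the corresponding row sum of A, and every column sum of Ã equals the corresponding column sum of A. -/

import Mathlib

open Matrix ComplexOrder

/-- Row-sum degree matrix of `A`. -/
def rowDeg {α β : Type*} [Fintype α] [Fintype β] [DecidableEq α]
    (A : Matrix α β ℝ) : Matrix α α ℝ :=
  Matrix.diagonal fun i => ∑ j, A i j

/-- Column-sum degree matrix of `A`. -/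
def colDeg {α β : Type*} [Fintype α] [Fintype β] [DecidableEq β]
    (A : Matrix α β ℝ) : Matrix β β ℝ :=
  Matrix.diagonal fun j => ∑ i, A i j

/-- The error matrix `E := D_row − A · D_col⁻ · Aᵀ` (with `0⁻¹ = 0`). -/
noncomputable def errE {α β : Type*} [Fintype α] [Fintype β] [DecidableEq α] [DecidableEq β]
    (A : Matrix α β ℝ) : Matrix α α ℝ :=
  rowDeg A - A * Matrix.diagonal (fun j => (∑ i, A i j)⁻¹) * Aᵀ

/-- The error matrix `F := D_col − Aᵀ · D_row⁻ · A` (with `0⁻¹ = 0`). -/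
noncomputable def errF {α β : Type*} [Fintype α] [Fintype β] [DecidableEq α] [DecidableEq β]
    (A : Matrix α β ℝ) : Matrix β β ℝ :=
  colDeg A - Aᵀ * Matrix.diagonal (fun i => (∑ j, A i j)⁻¹) * A

/-- `Ã ⊵_ε A`: `Ã` is an `ε`-SV approximation of the entrywise-nonnegative matrix `A`,
with degree matrices given by the row and column sums of `A` (real matrices viewed as
complex for the bilinear-form inequality). -/
noncomputable def IsSVgApprox {α β : Type*} [Fintype α] [Fintype β] [DecidableEq α]
    [DecidableEq β] (ε : ℝ) (A Atil : Matrix α β ℝ) : Prop :=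
  (errE A).PosSemidef ∧ (errF A).PosSemidef ∧
  ∀ (x : α → ℂ) (y : β → ℂ),
    ‖star x ⬝ᵥ ((Atil - A).map fun a => (a : ℂ)).mulVec y‖ ≤
      ε / 4 * ((star x ⬝ᵥ ((errE A).map fun a => (a : ℂ)).mulVec x).re +
        (star y ⬝ᵥ ((errF A).map fun a => (a : ℂ)).mulVec y).re)

/-!
Test the SV inequality with `x = t • eᵢ` and `y = 𝟙`. Every row of `F` sums to zero
(a column of a nonnegative matrix with zero sum vanishes, so the convention `0⁻¹ = 0` does
no harm), hence `y* F y = 0` and the inequality reads `t ‖((Ã - A) 𝟙)ᵢ‖ ≤ (ε / 4) Eᵢᵢ t²`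
for all `t > 0`, which forces `((Ã - A) 𝟙)ᵢ = 0`. Exchanging the roles of `x` and `y`
gives the column sums.
-/

open Filter Topology

lemma nonpos_of_forall_pos_le_mul {c C : ℝ} (h : ∀ t > 0, c ≤ C * t) : c ≤ 0 := by
  have hlim : Tendsto (fun t => C * t) (𝓝[>] 0) (𝓝 (C * 0)) :=
    ((continuous_const_mul C).tendsto 0).mono_left nhdsWithin_le_nhds
  simpa using ge_of_tendsto hlim (eventually_nhdsWithin_of_forall h)

section Form

variable {𝕜 α β : Type*} [RCLike 𝕜] [Fintype α] [Fintype β]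

lemma norm_star_dotProduct_conjTranspose_mulVec (M : Matrix α β 𝕜) (x : α → 𝕜)
    (y : β → 𝕜) :
    ‖star y ⬝ᵥ Mᴴ *ᵥ x‖ = ‖star x ⬝ᵥ M *ᵥ y‖ := by
  rw [dotProduct_mulVec, ← star_mulVec, star_dotProduct, norm_star]

lemma mulVec_one_eq_zero_of_norm_le [DecidableEq α] {M : Matrix α β 𝕜} {E : Matrix α α 𝕜}
    {F : Matrix β β 𝕜} {K : ℝ} (hF : F *ᵥ 1 = 0)
    (h : ∀ x y, ‖star x ⬝ᵥ M *ᵥ y‖ ≤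
      K * (RCLike.re (star x ⬝ᵥ E *ᵥ x) + RCLike.re (star y ⬝ᵥ F *ᵥ y))) :
    M *ᵥ 1 = 0 := by
  funext i
  refine norm_le_zero_iff.mp <|
    nonpos_of_forall_pos_le_mul (C := K * RCLike.re (E i i)) fun t ht => ?_
  have hi : t * ‖(M *ᵥ 1) i‖ ≤ K * (t * (t * RCLike.re (E i i))) := by
    simpa [hF, mulVec_single, abs_of_pos ht, RCLike.smul_re] using h (Pi.single i (t : 𝕜)) 1
  exact le_of_mul_le_mul_left (by linarith) ht

end Form

lemma map_ofReal_mulVec_one_eq_zero_iff {α β : Type*} [Fintype β] {N : Matrix α β ℝ} :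
    N.map ((↑) : ℝ → ℂ) *ᵥ 1 = 0 ↔ N *ᵥ 1 = 0 := by
  have : N.map ((↑) : ℝ → ℂ) *ᵥ 1 = fun i => ((N *ᵥ 1) i : ℂ) :=
    funext fun i => (RingHom.map_mulVec Complex.ofRealHom N 1 i).symm
  simp [this, funext_iff]

lemma conjTranspose_map_ofReal {α β : Type*} (N : Matrix α β ℝ) :
    (N.map ((↑) : ℝ → ℂ))ᴴ = Nᵀ.map ((↑) : ℝ → ℂ) := by
  ext
  simp

section Degree

variable {α β : Type*} [Fintype α] [Fintype β]

lemma mulVec_inv_colSum_mul_colSum {A : Matrix α β ℝ} (hA : ∀ i j, 0 ≤ A i j) :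
    A *ᵥ (fun j => (∑ i, A i j)⁻¹ * ∑ i, A i j) = A *ᵥ 1 := by
  funext i
  refine Finset.sum_congr rfl fun j _ => ?_
  rcases eq_or_ne (∑ k, A k j) 0 with h | h
  · simp [(Finset.sum_eq_zero_iff_of_nonneg fun k _ => hA k j).mp h i (Finset.mem_univ i)]
  · simp [h]

variable [DecidableEq α] [DecidableEq β]

lemma errE_mulVec_one {A : Matrix α β ℝ} (hA : ∀ i j, 0 ≤ A i j) : errE A *ᵥ 1 = 0 := by
  have hrow : rowDeg A *ᵥ 1 = A *ᵥ 1 := by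
    ext i
    rw [rowDeg, mulVec_diagonal]
    simp [mulVec, dotProduct]
  have hcol : (diagonal fun j => (∑ i, A i j)⁻¹) *ᵥ Aᵀ *ᵥ 1 =
      fun j => (∑ i, A i j)⁻¹ * ∑ i, A i j := by
    ext j
    rw [mulVec_diagonal]
    simp [mulVec, dotProduct]
  rw [errE, sub_mulVec, ← mulVec_mulVec, ← mulVec_mulVec, hrow, hcol,
    mulVec_inv_colSum_mul_colSum hA, sub_self]

lemma errF_eq_errE_transpose (A : Matrix α β ℝ) : errF A = errE Aᵀ := by
  simp [errF, errE, rowDeg, colDeg]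

lemma errF_mulVec_one {A : Matrix α β ℝ} (hA : ∀ i j, 0 ≤ A i j) : errF A *ᵥ 1 = 0 := by
  rw [errF_eq_errE_transpose]
  exact errE_mulVec_one fun i j => hA j i

end Degree

theorem stmt_15_general {m n : ℕ} (A Atil : Matrix (Fin m) (Fin n) ℝ)
    (hA : ∀ i j, 0 ≤ A i j)
    (ε : ℝ) (hSV : IsSVgApprox ε A Atil) :
    Atil.mulVec (fun _ => (1 : ℝ)) = A.mulVec (fun _ => (1 : ℝ)) ∧
    Atilᵀ.mulVec (fun _ => (1 : ℝ)) = Aᵀ.mulVec (fun _ => (1 : ℝ)) := by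
  obtain ⟨-, -, hbound⟩ := hSV
  set M := (Atil - A).map ((↑) : ℝ → ℂ)
  have hE := map_ofReal_mulVec_one_eq_zero_iff.mpr (errE_mulVec_one hA)
  have hF := map_ofReal_mulVec_one_eq_zero_iff.mpr (errF_mulVec_one hA)
  have hrow : M *ᵥ 1 = 0 := mulVec_one_eq_zero_of_norm_le hF hbound
  have hcol : Mᴴ *ᵥ 1 = 0 := mulVec_one_eq_zero_of_norm_le hE fun y x => by
    rw [norm_star_dotProduct_conjTranspose_mulVec, add_comm]
    exact hbound x y
  rw [map_ofReal_mulVec_one_eq_zero_iff, sub_mulVec, sub_eq_zero] at hrow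
  rw [conjTranspose_map_ofReal, map_ofReal_mulVec_one_eq_zero_iff, transpose_sub, sub_mulVec,
    sub_eq_zero] at hcol
  exact ⟨hrow, hcol⟩

/-- SV approximation of nonnegative matrices exactly preserves all row sums
and all column sums. -/
theorem stmt_15 {m n : ℕ} (A Atil : Matrix (Fin m) (Fin n) ℝ)
    (hA : ∀ i j, 0 ≤ A i j) (hAtil : ∀ i j, 0 ≤ Atil i j)
    (ε : ℝ) (hε : 0 ≤ ε) (hSV : IsSVgApprox ε A Atil) :
    Atil.mulVec (fun _ => (1 : ℝ)) = A.mulVec (fun _ => (1 : ℝ)) ∧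
    Atilᵀ.mulVec (fun _ => (1 : ℝ)) = Aᵀ.mulVec (fun _ => (1 : ℝ)) :=
  stmt_15_general A Atil hA ε hSV
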